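/- arXiv:2008.02512 — 2 statements merged into one kernel-verified Lean document; each statement's English description precedes it below -/
import Mathlib

section
/- The union of two compatible partially ordered logs is an upper bound of both: if G₁ ⊑ H and G₂ ⊑ H for some partially ordered log H, then L = G₁ ∪ G₂ (union of vertex and edge sets) is a partially ordered log satisfying G₁ ⊑ L and G₂ ⊑ L. -/
/-- A partially ordered log: a DAG over commands in which any two
conflicting vertices are joined by a directed edge. -/
structure PoLog (C : Type*) (conflict : C → C → Prop) where
  V : Set C
  E : C → C → Prop
  edge_mem : ∀ a b, E a b → a ∈ V ∧ b ∈ V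
  acyclic : ∀ c, ¬ Relation.TransGen E c c
  conflict_edge : ∀ a b, a ∈ V → b ∈ V → conflict a b → E a b ∨ E b a

/-- `G ⊑ H`: `G` is a subgraph of `H` and every edge of `H` into a vertex of `G`
is already an edge of `G`. -/
def PoLog.Prefix {C : Type*} {conflict : C → C → Prop}
    (G H : PoLog C conflict) : Prop :=
  G.V ⊆ H.V ∧ (∀ a b, G.E a b → H.E a b) ∧ (∀ a b, H.E a b → b ∈ G.V → G.E a b)

/-! Both logs sit inside `H`, so every edge of `G₁ ∪ G₂` is an edge of `H` and the union inherits
acyclicity from `H`. A conflict between `a ∈ G₁` and `b ∈ G₂` is resolved by an edge of `H`;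
since prefixes are closed under incoming `H`-edges, that edge already lies in `G₂` (if it points
to `b`) or in `G₁` (if it points to `a`). The same closure shows that the union adds no edge into
a vertex of `G₁` or `G₂`, which makes both of them prefixes of the union. -/

namespace PoLog

variable {C : Type*} {conflict : C → C → Prop} {G G₁ G₂ H : PoLog C conflict}

theorem acyclic_of_subrelation (H : PoLog C conflict) {E : C → C → Prop}
    (hE : ∀ a b, E a b → H.E a b) (c : C) : ¬ Relation.TransGen E c c :=
  fun hc => H.acyclic c (Relation.TransGen.mono hE c c hc)

namespace Prefix

theorem subset (h : G.Prefix H) : G.V ⊆ H.V := h.1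

theorem edge (h : G.Prefix H) {a b : C} (hab : G.E a b) : H.E a b := h.2.1 a b hab

theorem edge_of_target_mem (h : G.Prefix H) {a b : C} (hab : H.E a b) (hb : b ∈ G.V) :
    G.E a b :=
  h.2.2 a b hab hb

theorem edge_of_edge (h₁ : G₁.Prefix H) (h₂ : G₂.Prefix H) {a b : C} (hab : G₂.E a b)
    (hb : b ∈ G₁.V) : G₁.E a b :=
  h₁.edge_of_target_mem (h₂.edge hab) hb

theorem conflict_edge_of_mem (h₁ : G₁.Prefix H) (h₂ : G₂.Prefix H) {a b : C} (ha : a ∈ G₁.V)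
    (hb : b ∈ G₂.V) (hc : conflict a b) : G₂.E a b ∨ G₁.E b a :=
  (H.conflict_edge a b (h₁.subset ha) (h₂.subset hb) hc).imp
    (h₂.edge_of_target_mem · hb) (h₁.edge_of_target_mem · ha)

end Prefix

def union (G₁ G₂ H : PoLog C conflict) (h₁ : G₁.Prefix H) (h₂ : G₂.Prefix H) :
    PoLog C conflict where
  V := G₁.V ∪ G₂.V
  E a b := G₁.E a b ∨ G₂.E a b
  edge_mem := by
    rintro a b (hab | hab)
    · exact (G₁.edge_mem a b hab).imp Or.inl Or.inl
    · exact (G₂.edge_mem a b hab).imp Or.inr Or.inr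
  acyclic := H.acyclic_of_subrelation fun a b hab => hab.elim h₁.edge h₂.edge
  conflict_edge := by
    rintro a b (ha | ha) (hb | hb) hc
    · exact (G₁.conflict_edge a b ha hb hc).imp Or.inl Or.inl
    · exact (h₁.conflict_edge_of_mem h₂ ha hb hc).imp Or.inr Or.inl
    · exact (h₂.conflict_edge_of_mem h₁ ha hb hc).imp Or.inl Or.inr
    · exact (G₂.conflict_edge a b ha hb hc).imp Or.inr Or.inr

theorem prefix_union_left (h₁ : G₁.Prefix H) (h₂ : G₂.Prefix H) :
    G₁.Prefix (union G₁ G₂ H h₁ h₂) :=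
  ⟨Set.subset_union_left, fun _ _ => Or.inl, fun _ _ hab hb =>
    hab.elim id (h₁.edge_of_edge h₂ · hb)⟩

theorem prefix_union_right (h₁ : G₁.Prefix H) (h₂ : G₂.Prefix H) :
    G₂.Prefix (union G₁ G₂ H h₁ h₂) :=
  ⟨Set.subset_union_right, fun _ _ => Or.inr, fun _ _ hab hb =>
    hab.elim (h₂.edge_of_edge h₁ · hb) id⟩

end PoLog

/-- the union of two compatible partially ordered logs is a
partially ordered log and an upper bound of both. -/
theorem union_upper_bound {C : Type*} {conflict : C → C → Prop}
    (G₁ G₂ H : PoLog C conflict)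
    (h₁ : G₁.Prefix H) (h₂ : G₂.Prefix H) :
    ∃ L : PoLog C conflict,
      L.V = G₁.V ∪ G₂.V ∧
      (∀ a b, L.E a b ↔ (G₁.E a b ∨ G₂.E a b)) ∧
      G₁.Prefix L ∧ G₂.Prefix L :=
  ⟨PoLog.union G₁ G₂ H h₁ h₂, rfl, fun _ _ => Iff.rfl,
    PoLog.prefix_union_left h₁ h₂, PoLog.prefix_union_right h₁ h₂⟩
end

section
/- Generic SMR consistency via union: if for two processes the logs L_p and L_{p'} satisfy (a) any two conflicting commands appearing in both logs' union are joined by an edge in at least one log, and (b) every edge (c,d) of the union with d in L_q.V belongs to L_q.E for q ∈ {p,p'}, then L = L_p ∪ L_{p'} is acyclic provided both L_p and L_{p'} are acyclic. -/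
/-- the union of two partially ordered logs is acyclic,
provided (a) any two conflicting commands of the union are joined by an edge
in at least one log, and (b) every edge of the union into a vertex of `L_q`
is already an edge of `L_q` (prefix-closedness), for `q ∈ {p, p'}`. -/
theorem union_acyclic {C : Type*} {conflict : C → C → Prop}
    (L₁ L₂ : PoLog C conflict)
    (ha : ∀ c d, c ∈ L₁.V ∪ L₂.V → d ∈ L₁.V ∪ L₂.V → conflict c d →
      (L₁.E c d ∨ L₁.E d c ∨ L₂.E c d ∨ L₂.E d c))
    (hb : ∀ c d, (L₁.E c d ∨ L₂.E c d) →
      (d ∈ L₁.V → L₁.E c d) ∧ (d ∈ L₂.V → L₂.E c d)) :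
    ∀ c, ¬ Relation.TransGen (fun a b => L₁.E a b ∨ L₂.E a b) c c := by
  intro c hc
  have key : ∀ (L : PoLog C conflict),
      (∀ a b, (L₁.E a b ∨ L₂.E a b) → b ∈ L.V → L.E a b) →
      ∀ a b, Relation.TransGen (fun a b => L₁.E a b ∨ L₂.E a b) a b →
        b ∈ L.V → Relation.TransGen L.E a b := by
    intro L hL a b h
    induction h with
    | single h => exact fun hb => Relation.TransGen.single (hL _ _ h hb)
    | tail _ h ih =>
        intro hbV
        have hE := hL _ _ h hbV
        exact (ih ((L.edge_mem _ _ hE).1)).tail hE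
  -- c is a vertex of L₁ or L₂
  obtain ⟨d, hdc⟩ : ∃ d, (L₁.E d c ∨ L₂.E d c) := by
    cases hc with
    | single h => exact ⟨_, h⟩
    | tail _ h => exact ⟨_, h⟩
  have hcV : c ∈ L₁.V ∨ c ∈ L₂.V := by
    cases hdc with
    | inl h => exact Or.inl (L₁.edge_mem _ _ h).2
    | inr h => exact Or.inr (L₂.edge_mem _ _ h).2
  cases hcV with
  | inl hV =>
      exact L₁.acyclic c (key L₁ (fun a b h hmem => (hb a b h).1 hmem) c c hc hV)
  | inr hV =>
      exact L₂.acyclic c (key L₂ (fun a b h hmem => (hb a b h).2 hmem) c c hc hV)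
end
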